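/- Conjugation of the complex Laplacian on (0,n)-forms by multiplication with e^{-φ/2} yields a magnetic Schrödinger operator: for smooth compactly supported f : ℂⁿ → ℂ, e^{-φ/2} □^φ_{0,n} (e^{φ/2} f) = (1/4)(-Δ_A + V) f, where Δ_A = Σ_j [(-∂/∂x_j - (i/2)∂φ/∂y_j)² + (-∂/∂y_j + (i/2)∂φ/∂x_j)²] and V = 2 tr(M_φ). -/

import Mathlib

open Filter

/-- Partial derivative `∂/∂x_j` on `ℂⁿ`. -/
noncomputable def pdx (n : ℕ) (f : (Fin n → ℂ) → ℂ) (j : Fin n) (z : Fin n → ℂ) : ℂ :=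
  fderiv ℝ f z (Pi.single j 1)

/-- Partial derivative `∂/∂y_j` on `ℂⁿ`. -/
noncomputable def pdy (n : ℕ) (f : (Fin n → ℂ) → ℂ) (j : Fin n) (z : Fin n → ℂ) : ℂ :=
  fderiv ℝ f z (Pi.single j Complex.I)

/-- Wirtinger derivative `∂/∂z_j = (1/2)(∂/∂x_j - i ∂/∂y_j)`. -/
noncomputable def pdz (n : ℕ) (f : (Fin n → ℂ) → ℂ) (j : Fin n) (z : Fin n → ℂ) : ℂ :=
  (1 / 2 : ℂ) * (pdx n f j z - Complex.I * pdy n f j z)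

/-- Wirtinger derivative `∂/∂z̄_j = (1/2)(∂/∂x_j + i ∂/∂y_j)`. -/
noncomputable def pdzbar (n : ℕ) (f : (Fin n → ℂ) → ℂ) (j : Fin n) (z : Fin n → ℂ) : ℂ :=
  (1 / 2 : ℂ) * (pdx n f j z + Complex.I * pdy n f j z)

/-- The real Laplacian `Δ = Σ_j (∂²/∂x_j² + ∂²/∂y_j²)` on `ℂⁿ`. -/
noncomputable def lapn (n : ℕ) (f : (Fin n → ℂ) → ℂ) (z : Fin n → ℂ) : ℂ :=
  ∑ j, (pdx n (pdx n f j) j z + pdy n (pdy n f j) j z)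

/-- The complex Laplacian `□^φ_{0,n}` acting on the coefficient `g` of a `(0,n)`-form:
`□^φ g = -(1/4)Δg + Σ_j (∂φ/∂z_j)(∂g/∂z̄_j) + (1/4)(Δφ)g`. -/
noncomputable def boxPhi (n : ℕ) (φ : (Fin n → ℂ) → ℝ) (g : (Fin n → ℂ) → ℂ)
    (z : Fin n → ℂ) : ℂ :=
  -(1 / 4 : ℂ) * lapn n g z
    + ∑ j, pdz n (fun w => (φ w : ℂ)) j z * pdzbar n g j z
    + (1 / 4 : ℂ) * lapn n (fun w => (φ w : ℂ)) z * g z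

/-- The magnetic momentum operator `-∂/∂x_j - (i/2)(∂φ/∂y_j)`. -/
noncomputable def magP1 (n : ℕ) (φ : (Fin n → ℂ) → ℝ) (j : Fin n)
    (f : (Fin n → ℂ) → ℂ) (z : Fin n → ℂ) : ℂ :=
  -(pdx n f j z) - (Complex.I / 2) * pdy n (fun w => (φ w : ℂ)) j z * f z

/-- The magnetic momentum operator `-∂/∂y_j + (i/2)(∂φ/∂x_j)`. -/
noncomputable def magP2 (n : ℕ) (φ : (Fin n → ℂ) → ℝ) (j : Fin n)
    (f : (Fin n → ℂ) → ℂ) (z : Fin n → ℂ) : ℂ :=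
  -(pdy n f j z) + (Complex.I / 2) * pdx n (fun w => (φ w : ℂ)) j z * f z

/-- The magnetic Laplacian `Δ_A = Σ_j [(-∂/∂x_j - (i/2)∂φ/∂y_j)² + (-∂/∂y_j + (i/2)∂φ/∂x_j)²]`. -/
noncomputable def lapA (n : ℕ) (φ : (Fin n → ℂ) → ℝ) (f : (Fin n → ℂ) → ℂ)
    (z : Fin n → ℂ) : ℂ :=
  ∑ j, (magP1 n φ j (magP1 n φ j f) z + magP2 n φ j (magP2 n φ j f) z)


/-- `φ` as a complex-valued function. -/
noncomputable def Phic (n : ℕ) (φ : (Fin n → ℂ) → ℝ) : (Fin n → ℂ) → ℂ :=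
  fun w => ((φ w : ℝ) : ℂ)

/-- `e^{φ/2}` as a complex-valued function. -/
noncomputable def Efun (n : ℕ) (φ : (Fin n → ℂ) → ℝ) : (Fin n → ℂ) → ℂ :=
  fun w => ((Real.exp (φ w / 2) : ℝ) : ℂ)

lemma contDiff_Phic {n : ℕ} (φ : (Fin n → ℂ) → ℝ) (hφ : ContDiff ℝ (⊤ : ℕ∞) φ) :
    ContDiff ℝ (⊤ : ℕ∞) (Phic n φ) := Complex.ofRealCLM.contDiff.comp hφ

lemma contDiff_Efun {n : ℕ} (φ : (Fin n → ℂ) → ℝ) (hφ : ContDiff ℝ (⊤ : ℕ∞) φ) :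
    ContDiff ℝ (⊤ : ℕ∞) (Efun n φ) :=
  Complex.ofRealCLM.contDiff.comp (Real.contDiff_exp.comp (hφ.div_const 2))

lemma contDiff_pdv {n : ℕ} {h : (Fin n → ℂ) → ℂ} (hh : ContDiff ℝ (⊤ : ℕ∞) h) (v : Fin n → ℂ) :
    ContDiff ℝ (⊤ : ℕ∞) (fun w => fderiv ℝ h w v) :=
  (ContinuousLinearMap.apply ℝ ℂ v).contDiff.comp (hh.fderiv_right (by simp))

lemma fderiv_Efun {n : ℕ} (φ : (Fin n → ℂ) → ℝ) (hφ : ContDiff ℝ (⊤ : ℕ∞) φ)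
    (w v : Fin n → ℂ) :
    fderiv ℝ (Efun n φ) w v = (1:ℂ)/2 * fderiv ℝ (Phic n φ) w v * Efun n φ w := by
  have hΦ := contDiff_Phic φ hφ
  have h1 : HasFDerivAt (Phic n φ) (fderiv ℝ (Phic n φ) w) w :=
    (hΦ.differentiable (by simp) w).hasFDerivAt
  have h2 := (h1.const_mul ((1:ℂ)/2)).cexp
  have h4 : Efun n φ = fun y => Complex.exp ((1:ℂ)/2 * Phic n φ y) := by
    funext y
    simp only [Efun, Phic]
    rw [Complex.ofReal_exp]
    congr 1
    push_cast
    ring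
  rw [h4, h2.fderiv]
  simp only [ContinuousLinearMap.smul_apply, smul_eq_mul]
  ring

lemma first_G {n : ℕ} (φ : (Fin n → ℂ) → ℝ) (hφ : ContDiff ℝ (⊤ : ℕ∞) φ)
    (f : (Fin n → ℂ) → ℂ) (hf : ContDiff ℝ (⊤ : ℕ∞) f) (w v' : Fin n → ℂ) :
    fderiv ℝ (fun y => Efun n φ y * f y) w v' =
      (1:ℂ)/2 * fderiv ℝ (Phic n φ) w v' * Efun n φ w * f w
        + Efun n φ w * fderiv ℝ f w v' := by
  have hE := contDiff_Efun φ hφ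
  have H := ((hE.differentiable (by simp) w).hasFDerivAt.mul
    (hf.differentiable (by simp) w).hasFDerivAt)
  erw [H.fderiv]
  simp only [ContinuousLinearMap.add_apply, ContinuousLinearMap.smul_apply, smul_eq_mul]
  rw [fderiv_Efun φ hφ]
  ring

lemma second_x {n : ℕ} (φ : (Fin n → ℂ) → ℝ) (hφ : ContDiff ℝ (⊤ : ℕ∞) φ)
    (f : (Fin n → ℂ) → ℂ) (hf : ContDiff ℝ (⊤ : ℕ∞) f) (v' v'' z : Fin n → ℂ) :
    fderiv ℝ (fun w => (1:ℂ)/2 * fderiv ℝ (Phic n φ) w v' * Efun n φ w * f w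
        + Efun n φ w * fderiv ℝ f w v') z v'' =
      (1:ℂ)/2 * fderiv ℝ (fun w => fderiv ℝ (Phic n φ) w v') z v'' * Efun n φ z * f z
      + 1/4 * fderiv ℝ (Phic n φ) z v' * fderiv ℝ (Phic n φ) z v'' * Efun n φ z * f z
      + 1/2 * fderiv ℝ (Phic n φ) z v' * Efun n φ z * fderiv ℝ f z v''
      + 1/2 * fderiv ℝ (Phic n φ) z v'' * Efun n φ z * fderiv ℝ f z v'
      + Efun n φ z * fderiv ℝ (fun w => fderiv ℝ f w v') z v'' := by
  have hΦ := contDiff_Phic φ hφ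
  have hE := contDiff_Efun φ hφ
  have Hp : HasFDerivAt (fun w => fderiv ℝ (Phic n φ) w v')
      (fderiv ℝ (fun w => fderiv ℝ (Phic n φ) w v') z) z :=
    ((contDiff_pdv hΦ v').differentiable (by simp) z).hasFDerivAt
  have HE : HasFDerivAt (Efun n φ) (fderiv ℝ (Efun n φ) z) z :=
    (hE.differentiable (by simp) z).hasFDerivAt
  have Hf : HasFDerivAt f (fderiv ℝ f z) z := (hf.differentiable (by simp) z).hasFDerivAt
  have Hs : HasFDerivAt (fun w => fderiv ℝ f w v')
      (fderiv ℝ (fun w => fderiv ℝ f w v') z) z :=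
    ((contDiff_pdv hf v').differentiable (by simp) z).hasFDerivAt
  have H := (((Hp.const_mul ((1:ℂ)/2)).mul HE).mul Hf).add (HE.mul Hs)
  erw [H.fderiv]
  simp only [ContinuousLinearMap.add_apply, ContinuousLinearMap.smul_apply, smul_eq_mul,
    Pi.mul_apply]
  rw [fderiv_Efun φ hφ]
  ring

lemma second_mag {n : ℕ} (φ : (Fin n → ℂ) → ℝ) (hφ : ContDiff ℝ (⊤ : ℕ∞) φ)
    (f : (Fin n → ℂ) → ℂ) (hf : ContDiff ℝ (⊤ : ℕ∞) f) (c : ℂ) (v' u' v'' z : Fin n → ℂ) :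
    fderiv ℝ (fun w => -(fderiv ℝ f w v') + c * fderiv ℝ (Phic n φ) w u' * f w) z v'' =
      -(fderiv ℝ (fun w => fderiv ℝ f w v') z v'')
      + c * fderiv ℝ (fun w => fderiv ℝ (Phic n φ) w u') z v'' * f z
      + c * fderiv ℝ (Phic n φ) z u' * fderiv ℝ f z v'' := by
  have hΦ := contDiff_Phic φ hφ
  have Hs : HasFDerivAt (fun w => fderiv ℝ f w v')
      (fderiv ℝ (fun w => fderiv ℝ f w v') z) z :=
    ((contDiff_pdv hf v').differentiable (by simp) z).hasFDerivAt
  have Hq : HasFDerivAt (fun w => fderiv ℝ (Phic n φ) w u')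
      (fderiv ℝ (fun w => fderiv ℝ (Phic n φ) w u') z) z :=
    ((contDiff_pdv hΦ u').differentiable (by simp) z).hasFDerivAt
  have Hf : HasFDerivAt f (fderiv ℝ f z) z := (hf.differentiable (by simp) z).hasFDerivAt
  have H := (Hs.neg).add ((Hq.const_mul c).mul Hf)
  erw [H.fderiv]
  simp only [ContinuousLinearMap.add_apply, ContinuousLinearMap.neg_apply,
    ContinuousLinearMap.smul_apply, smul_eq_mul]
  ring

lemma pd_symm {n : ℕ} (g : (Fin n → ℂ) → ℂ) (hg : ContDiff ℝ (⊤ : ℕ∞) g) (z v u : Fin n → ℂ) :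
    fderiv ℝ (fun w => fderiv ℝ g w u) z v = fderiv ℝ (fun w => fderiv ℝ g w v) z u := by
  have hd : ∀ y, HasFDerivAt g (fderiv ℝ g y) y := fun y =>
    (hg.differentiable (by simp) y).hasFDerivAt
  have hg2 : DifferentiableAt ℝ (fderiv ℝ g) z :=
    ((hg.fderiv_right (m := (⊤ : ℕ∞)) (by simp)).differentiable (by simp)) z
  have hd2 := hg2.hasFDerivAt
  have hsym := second_derivative_symmetric hd hd2 v u
  rw [show (fun w => fderiv ℝ g w u) = (fun w => (fderiv ℝ g w) ((fun _ => u) w)) from rfl,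
    fderiv_clm_apply hg2 (differentiableAt_const u)]
  rw [show (fun w => fderiv ℝ g w v) = (fun w => (fderiv ℝ g w) ((fun _ => v) w)) from rfl,
    fderiv_clm_apply hg2 (differentiableAt_const v)]
  simp only [fderiv_fun_const, Pi.zero_apply, ContinuousLinearMap.comp_zero,
    ContinuousLinearMap.add_apply, ContinuousLinearMap.zero_apply,
    ContinuousLinearMap.flip_apply, zero_add]
  exact hsym

set_option maxHeartbeats 1000000 in
lemma key_j {n : ℕ} (φ : (Fin n → ℂ) → ℝ) (hφ : ContDiff ℝ (⊤ : ℕ∞) φ)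
    (f : (Fin n → ℂ) → ℂ) (hf : ContDiff ℝ (⊤ : ℕ∞) f) (z : Fin n → ℂ) (j : Fin n) :
    (Real.exp (-(φ z) / 2) : ℂ) *
      (-(1 / 4 : ℂ) * (pdx n (pdx n (fun w => Efun n φ w * f w) j) j z
          + pdy n (pdy n (fun w => Efun n φ w * f w) j) j z)
        + pdz n (Phic n φ) j z * pdzbar n (fun w => Efun n φ w * f w) j z
        + (1 / 4 : ℂ) * (pdx n (pdx n (Phic n φ) j) j z
            + pdy n (pdy n (Phic n φ) j) j z) * (Efun n φ z * f z)) =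
    (1 / 4 : ℂ) * (-(magP1 n φ j (magP1 n φ j f) z + magP2 n φ j (magP2 n φ j f) z)
      + 2 * ((1 / 4 : ℂ) * (pdx n (pdx n (Phic n φ) j) j z
          + pdy n (pdy n (Phic n φ) j) j z)) * f z) := by
  have upx : ∀ h : (Fin n → ℂ) → ℂ, pdx n h j = fun w => fderiv ℝ h w (Pi.single j 1) :=
    fun _ => rfl
  have upy : ∀ h : (Fin n → ℂ) → ℂ,
      pdy n h j = fun w => fderiv ℝ h w (Pi.single j Complex.I) := fun _ => rfl
  have hPhiEq : (fun w => ((φ w : ℝ) : ℂ)) = Phic n φ := rfl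
  have hm1 : magP1 n φ j f = fun w => -(fderiv ℝ f w (Pi.single j 1))
      + (-(Complex.I / 2)) * fderiv ℝ (Phic n φ) w (Pi.single j Complex.I) * f w := by
    funext w
    simp only [magP1, upx, upy, hPhiEq]
    ring
  have hm2 : magP2 n φ j f = fun w => -(fderiv ℝ f w (Pi.single j Complex.I))
      + (Complex.I / 2) * fderiv ℝ (Phic n φ) w (Pi.single j 1) * f w := by
    funext w
    simp only [magP2, upx, upy, hPhiEq]
  rw [hm1, hm2]
  simp only [magP1, magP2, pdz, pdzbar, upx, upy, hPhiEq]
  simp only [first_G φ hφ f hf]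
  rw [second_x φ hφ f hf (Pi.single j 1) (Pi.single j 1) z,
    second_x φ hφ f hf (Pi.single j Complex.I) (Pi.single j Complex.I) z,
    second_mag φ hφ f hf (-(Complex.I / 2)) (Pi.single j 1) (Pi.single j Complex.I)
      (Pi.single j 1) z,
    second_mag φ hφ f hf (Complex.I / 2) (Pi.single j Complex.I) (Pi.single j 1)
      (Pi.single j Complex.I) z,
    pd_symm (Phic n φ) (contDiff_Phic φ hφ) z (Pi.single j 1) (Pi.single j Complex.I)]
  have hne : Efun n φ z ≠ 0 := Complex.ofReal_ne_zero.mpr (Real.exp_ne_zero _)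
  have hem : (Real.exp (-(φ z) / 2) : ℂ) = (Efun n φ z)⁻¹ := by
    have h : Real.exp (-(φ z) / 2) = (Real.exp (φ z / 2))⁻¹ := by
      rw [← Real.exp_neg]; ring_nf
    simp only [Efun]
    rw [h, Complex.ofReal_inv]
  rw [hem]
  field_simp
  ring_nf
  simp only [Complex.I_sq]
  ring

/-- Conjugating the complex Laplacian on `(0,n)`-forms by multiplication with `e^{-φ/2}`
yields the magnetic Schrödinger operator `(1/4)(-Δ_A + V)` with `V = 2 tr(M_φ) = (1/2)Δφ`. -/
theorem conjugated_laplacian_eq_schrodinger {n : ℕ} (φ : (Fin n → ℂ) → ℝ)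
    (hφ : ContDiff ℝ (⊤ : ℕ∞) φ) (f : (Fin n → ℂ) → ℂ) (hf : ContDiff ℝ (⊤ : ℕ∞) f)
    (hsupp : HasCompactSupport f) (z : Fin n → ℂ) :
    (Real.exp (-(φ z) / 2) : ℂ) *
        boxPhi n φ (fun w => (Real.exp (φ w / 2) : ℂ) * f w) z =
      (1 / 4 : ℂ) * (-(lapA n φ f z) +
        2 * ((1 / 4 : ℂ) * lapn n (fun w => (φ w : ℂ)) z) * f z) := by
  have e1 : (fun w => ((Real.exp (φ w / 2) : ℝ) : ℂ) * f w) = (fun w => Efun n φ w * f w) :=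
    rfl
  have e2 : (fun w => ((φ w : ℝ) : ℂ)) = Phic n φ := rfl
  rw [e1]
  simp only [boxPhi, lapn, lapA, e2]
  simp only [Finset.mul_sum, Finset.sum_mul, ← Finset.sum_neg_distrib,
    ← Finset.sum_add_distrib]
  refine Finset.sum_congr rfl fun j _ => ?_
  linear_combination key_j φ hφ f hf z j
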